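/- For all integers i ≥ 0, k ≥ 1 and n ≥ 0, Φ_{k+1}(Δ^i S_n)·H_{k−1}(Δ^i S_{n+1}) = Φ_k(Δ^i S_n)·H_k(Δ^i S_{n+1}) − Φ_k(Δ^i S_{n+1})·H_k(Δ^i S_n). -/

import Mathlib

/-- Forward difference operator: `(fd u) n = u (n+1) - u n`.
Iterated differences are `fd^[i] u`. -/
def fd (u : ℕ → ℝ) : ℕ → ℝ := fun n => u (n + 1) - u n

/-- Hankel-type determinant `H_k(u_n)` (depending on the fixed integer `m`):
the determinant of the `k × k` matrix whose `(i,j)` entry is `Δ^{i·m} u_{n+j}`.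
By convention `H_k = 0` for `k < 0`, and `H_0 = 1` (empty determinant). -/
noncomputable def Hd (m : ℕ) (u : ℕ → ℝ) (k : ℤ) (n : ℕ) : ℝ :=
  if k < 0 then 0
  else Matrix.det (Matrix.of fun i j : Fin k.toNat => fd^[i.val * m] u (n + j.val))

/-- Determinant `Φ_k(u_n)`: the `k × k` determinant whose first row is
`(n, n+1, …, n+k−1)` and whose `i`-th row (`1 ≤ i ≤ k−1`) is
`(Δ^{(i−1)m} u_n, …, Δ^{(i−1)m} u_{n+k−1})`. `Φ_0 = 1` (empty determinant). -/
noncomputable def Phi (m : ℕ) (u : ℕ → ℝ) (k : ℕ) (n : ℕ) : ℝ :=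
  Matrix.det (Matrix.of fun i j : Fin k =>
    if i.val = 0 then ((n + j.val : ℕ) : ℝ) else fd^[(i.val - 1) * m] u (n + j.val))

/-!
This is the Desnanot–Jacobi condensation identity for the `(k+1) × (k+1)` matrix of `Φ_{k+1}(u_n)`:
removing its last row together with its last (resp. first) column leaves the matrix of `Φ_k(u_n)`
(resp. `Φ_k(u_{n+1})`), removing its first row together with its last (resp. first) column leaves
that of `H_k(u_n)` (resp. `H_k(u_{n+1})`), and removing both outer rows and columns leaves that of
`H_{k−1}(u_{n+1})`.

Desnanot–Jacobi is the `2 × 2` case of Jacobi's complementary minor theorem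
`det (adj A)₁₁ = det A ^ (|m| − 1) · det A₂₂` for a matrix `A` with blocks indexed by `m ⊕ n`.
Multiplying `A` by `[[(adj A)₁₁, 0], [(adj A)₂₁, 1]]` gives `[[det A · 1, A₁₂], [0, A₂₂]]`, so the
theorem holds after cancelling `det A`; this is legitimate for the generic matrix over `ℤ[X_ij]`,
and the general case follows by specialization.
-/

namespace Fin

noncomputable def outerSumInnerEquiv (N : ℕ) : Fin 2 ⊕ Fin N ≃ Fin (N + 2) :=
  Equiv.ofBijective (Sum.elim ![0, Fin.last (N + 1)] fun j => j.castSucc.succ) <| by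
    refine (Fintype.bijective_iff_injective_and_card _).2 ⟨?_, by simp [add_comm]⟩
    refine Function.Injective.sumElim ?_ (fun i j h => by simpa using h) ?_
    · intro a b h
      fin_cases a <;> fin_cases b <;> simp_all [Fin.ext_iff]
    · intro a j
      fin_cases a <;> simp [Fin.ext_iff]; omega

end Fin

namespace Matrix

variable {m n R : Type*} [Fintype m] [Fintype n] [DecidableEq m] [DecidableEq n] [CommRing R]

theorem det_mul_det_toBlocks₁₁_adjugate (A : Matrix (m ⊕ n) (m ⊕ n) R) :
    A.det * (adjugate A).toBlocks₁₁.det = A.det ^ Fintype.card m * A.toBlocks₂₂.det := by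
  set B := adjugate A
  have hblocks : fromBlocks A.toBlocks₁₁ A.toBlocks₁₂ A.toBlocks₂₁ A.toBlocks₂₂ *
      fromBlocks B.toBlocks₁₁ B.toBlocks₁₂ B.toBlocks₂₁ B.toBlocks₂₂ =
      fromBlocks (A.det • 1) 0 0 (A.det • 1) := by
    rw [fromBlocks_toBlocks, fromBlocks_toBlocks, mul_adjugate, ← fromBlocks_one,
      fromBlocks_smul, smul_zero, smul_zero]
  rw [fromBlocks_multiply, fromBlocks_inj] at hblocks
  obtain ⟨h₁₁, -, h₂₁, -⟩ := hblocks
  have hmul : A * fromBlocks B.toBlocks₁₁ 0 B.toBlocks₂₁ 1 =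
      fromBlocks (A.det • 1) A.toBlocks₁₂ 0 A.toBlocks₂₂ := by
    conv_lhs => rw [← fromBlocks_toBlocks A]
    rw [fromBlocks_multiply]
    simp [h₁₁, h₂₁]
  calc A.det * B.toBlocks₁₁.det = (A * fromBlocks B.toBlocks₁₁ 0 B.toBlocks₂₁ 1).det := by
        rw [det_mul, det_fromBlocks_zero₁₂, det_one, mul_one]
    _ = A.det ^ Fintype.card m * A.toBlocks₂₂.det := by
        rw [hmul, det_fromBlocks_zero₂₁, det_smul, det_one, mul_one]

theorem det_toBlocks₁₁_adjugate [Nonempty m] (A : Matrix (m ⊕ n) (m ⊕ n) R) :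
    (adjugate A).toBlocks₁₁.det = A.det ^ (Fintype.card m - 1) * A.toBlocks₂₂.det := by
  let A' := mvPolynomialX (m ⊕ n) (m ⊕ n) ℤ
  suffices (adjugate A').toBlocks₁₁.det = A'.det ^ (Fintype.card m - 1) * A'.toBlocks₂₂.det by
    have := congrArg (MvPolynomial.aeval fun p : (m ⊕ n) × (m ⊕ n) ↦ A p.1 p.2) this
    rw [← mvPolynomialX_mapMatrix_aeval ℤ A, ← AlgHom.map_adjugate]
    rw [map_mul, map_pow, AlgHom.map_det, AlgHom.map_det, AlgHom.map_det] at this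
    exact this
  apply mul_left_cancel₀ (det_mvPolynomialX_ne_zero (m ⊕ n) ℤ)
  rw [det_mul_det_toBlocks₁₁_adjugate, ← mul_assoc, ← pow_succ',
    Nat.sub_add_cancel Fintype.card_pos]

theorem desnanot_jacobi {N : ℕ} (A : Matrix (Fin (N + 2)) (Fin (N + 2)) R) :
    A.det * ((A.submatrix Fin.succ Fin.succ).submatrix Fin.castSucc Fin.castSucc).det =
      (A.submatrix Fin.succ Fin.succ).det * (A.submatrix Fin.castSucc Fin.castSucc).det -
        (A.submatrix Fin.succ Fin.castSucc).det * (A.submatrix Fin.castSucc Fin.succ).det := by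
  have h := det_toBlocks₁₁_adjugate
    (A.submatrix (Fin.outerSumInnerEquiv N) (Fin.outerSumInnerEquiv N))
  rw [det_submatrix_equiv_self, adjugate_submatrix_equiv_self, det_fin_two] at h
  simp only [toBlocks₁₁, toBlocks₂₂, Fin.outerSumInnerEquiv, Equiv.coe_ofBijective,
    submatrix_apply, of_apply, Sum.elim_inl, Sum.elim_inr, cons_val_zero, cons_val_one,
    cons_val_fin_one, adjugate_fin_succ_eq_det_submatrix, Fin.succAbove_zero, Fin.succAbove_last,
    Fin.val_zero, Fin.val_last, add_zero, zero_add, pow_zero, one_mul, Even.add_self,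
    Even.neg_pow, one_pow, Fintype.card_fin, Nat.add_one_sub_one, pow_one] at h
  change _ = A.det * ((A.submatrix Fin.succ Fin.succ).submatrix Fin.castSucc Fin.castSucc).det at h
  have hsign : ((-1 : R) ^ (N + 1)) ^ 2 = 1 := by rw [← pow_mul, pow_mul']; simp
  linear_combination -h - (A.submatrix Fin.succ Fin.castSucc).det *
    (A.submatrix Fin.castSucc Fin.succ).det * hsign

end Matrix

noncomputable def phiMatrix (m : ℕ) (u : ℕ → ℝ) (k n : ℕ) : Matrix (Fin k) (Fin k) ℝ :=
  Matrix.of fun i j => if i.val = 0 then ((n + j.val : ℕ) : ℝ) else fd^[(i.val - 1) * m] u (n + j.val)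

noncomputable def hankelMatrix (m : ℕ) (u : ℕ → ℝ) (k n : ℕ) : Matrix (Fin k) (Fin k) ℝ :=
  Matrix.of fun i j => fd^[i.val * m] u (n + j.val)

section

variable (m : ℕ) (u : ℕ → ℝ) (k n : ℕ)

theorem Phi_eq_det : Phi m u k n = (phiMatrix m u k n).det := rfl

theorem Hd_natCast : Hd m u k n = (hankelMatrix m u k n).det := by
  rw [Hd, if_neg (Int.natCast_nonneg k).not_gt, Int.toNat_natCast]
  rfl

theorem phiMatrix_submatrix_castSucc_castSucc :
    (phiMatrix m u (k + 1) n).submatrix Fin.castSucc Fin.castSucc = phiMatrix m u k n := rfl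

theorem phiMatrix_submatrix_castSucc_succ :
    (phiMatrix m u (k + 1) n).submatrix Fin.castSucc Fin.succ = phiMatrix m u k (n + 1) := by
  ext i j
  simp only [phiMatrix, Matrix.submatrix_apply, Matrix.of_apply, Fin.val_castSucc, Fin.val_succ,
    add_assoc, add_comm 1]

theorem phiMatrix_submatrix_succ_castSucc :
    (phiMatrix m u (k + 1) n).submatrix Fin.succ Fin.castSucc = hankelMatrix m u k n := by
  ext i j
  simp [phiMatrix, hankelMatrix]

theorem phiMatrix_submatrix_succ_succ :
    (phiMatrix m u (k + 1) n).submatrix Fin.succ Fin.succ = hankelMatrix m u k (n + 1) := by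
  ext i j
  simp [phiMatrix, hankelMatrix, add_assoc, add_comm 1]

theorem hankelMatrix_submatrix_castSucc_castSucc :
    (hankelMatrix m u (k + 1) n).submatrix Fin.castSucc Fin.castSucc = hankelMatrix m u k n := rfl

theorem Phi_add_two_mul_Hd :
    Phi m u (k + 2) n * Hd m u k (n + 1) =
      Phi m u (k + 1) n * Hd m u (k + 1 : ℕ) (n + 1) -
        Phi m u (k + 1) (n + 1) * Hd m u (k + 1 : ℕ) n := by
  have h := Matrix.desnanot_jacobi (phiMatrix m u (k + 1 + 1) n)
  rw [phiMatrix_submatrix_succ_succ, hankelMatrix_submatrix_castSucc_castSucc,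
    phiMatrix_submatrix_castSucc_castSucc, phiMatrix_submatrix_succ_castSucc,
    phiMatrix_submatrix_castSucc_succ] at h
  simp only [Phi_eq_det, Hd_natCast]
  linear_combination h

end

theorem stmt_6_general (m : ℕ) (S : ℕ → ℝ) (i k n : ℕ) (hk : 1 ≤ k) :
    Phi m (fd^[i] S) (k + 1) n * Hd m (fd^[i] S) ((k : ℤ) - 1) (n + 1) =
      Phi m (fd^[i] S) k n * Hd m (fd^[i] S) (k : ℤ) (n + 1) -
        Phi m (fd^[i] S) k (n + 1) * Hd m (fd^[i] S) (k : ℤ) n := by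
  obtain ⟨k, rfl⟩ := Nat.exists_eq_add_of_le' hk
  rw [Nat.cast_succ, add_sub_cancel_right]
  exact Phi_add_two_mul_Hd m (fd^[i] S) k n

/-- For `i ≥ 0`, `k ≥ 1`, `n ≥ 0`: `Φ_{k+1}(Δ^i S_n) H_{k−1}(Δ^i S_{n+1})
= Φ_k(Δ^i S_n) H_k(Δ^i S_{n+1}) − Φ_k(Δ^i S_{n+1}) H_k(Δ^i S_n)`. -/
theorem stmt_6 (m : ℕ) (hm : 1 ≤ m) (S : ℕ → ℝ) (i k n : ℕ) (hk : 1 ≤ k) :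
    Phi m (fd^[i] S) (k + 1) n * Hd m (fd^[i] S) ((k : ℤ) - 1) (n + 1) =
      Phi m (fd^[i] S) k n * Hd m (fd^[i] S) (k : ℤ) (n + 1) -
        Phi m (fd^[i] S) k (n + 1) * Hd m (fd^[i] S) (k : ℤ) n :=
  stmt_6_general m S i k n hk
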